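/- Let q ≥ 2, b_n = q^{v_q(n)}, C_q(n,m) = b_n!/(b_m!·b_{n-m}!) (and 0 if m > n), and let u_n(x) = Σ_m C_q(n,m)·x^m be the n-th row polynomial. Then for 0 ≤ m < q: u_{qn+m}(x) = w_m(x)·u_n(x^q) + q·b_n·x^{m+1}·w_{q-2-m}(x)·u_{n-1}(x^q), where w_r(x) = Σ_{s=0}^r x^s for r ≥ 0 and w_{-1}(x) = 0 (the term with u_{n-1} is absent when n = 0). -/

import Mathlib

/-- `b_n = q^{v_q(n)}` for `n ≥ 1`, `b_0 = 0`. -/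
noncomputable def bq (q n : ℕ) : ℚ := if n = 0 then 0 else (q : ℚ) ^ Nat.maxPowDiv q n

/-- `b_n! = ∏_{m=1}^n b_m`. -/
noncomputable def bqfac (q n : ℕ) : ℚ := ∏ m ∈ Finset.Icc 1 n, bq q m

/-- `C_q(n,m) = b_n!/(b_m!·b_{n-m}!)` for `m ≤ n`, `0` otherwise. -/
noncomputable def Cq (q n m : ℕ) : ℚ :=
  if m ≤ n then bqfac q n / (bqfac q m * bqfac q (n - m)) else 0

/-- The `n`-th row polynomial `u_n(x) = Σ_m C_q(n,m) x^m`. -/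
noncomputable def u (q n : ℕ) : Polynomial ℚ :=
  ∑ m ∈ Finset.range (n + 1), Polynomial.C (Cq q n m) * Polynomial.X ^ m

/-- `w_r(x) = 1 + x + ⋯ + x^r` for `r ≥ 0`, and `w_{-1} = 0`. -/
noncomputable def w (r : ℤ) : Polynomial ℚ :=
  if r < 0 then 0 else ∑ s ∈ Finset.range (r.toNat + 1), Polynomial.X ^ s

open Finset Polynomial

set_option linter.unusedSectionVars false
section aux
variable {q : ℕ} (hq : 2 ≤ q)
include hq

lemma hq0 : (q : ℚ) ≠ 0 := by positivity

lemma maxPowDiv_eq_zero {j : ℕ} (h : ¬ q ∣ j) : Nat.maxPowDiv q j = 0 := by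
  by_contra hne
  exact h (dvd_trans (dvd_pow_self q hne) (Nat.maxPowDiv.pow_dvd (p := q) (n := j)))

lemma bq_not_dvd {j : ℕ} (h : ¬ q ∣ j) : bq q j = 1 := by
  have hj : j ≠ 0 := by rintro rfl; exact h (dvd_zero q)
  simp [bq, hj, maxPowDiv_eq_zero hq h]

lemma bq_mul {k : ℕ} (hk : k ≠ 0) : bq q (q * k) = q * bq q k := by
  have : q * k ≠ 0 := by positivity
  simp only [bq, hk, this, if_false]
  rw [show Nat.maxPowDiv q (q * k) = Nat.maxPowDiv q k + 1 from Nat.maxPowDiv.base_mul_eq_succ hq hk]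
  ring

lemma bqfac_succ (n : ℕ) : bqfac q (n + 1) = bqfac q n * bq q (n + 1) := by
  rw [bqfac, bqfac, Finset.prod_Icc_succ_top (by omega)]

lemma not_dvd_aux {a i : ℕ} (h1 : 0 < i) (h2 : i < q) : ¬ q ∣ (q * a + i) := by
  intro h
  have hd : q ∣ i := (Nat.dvd_add_right (Dvd.intro a rfl)).mp h
  have := Nat.le_of_dvd h1 hd
  omega

lemma bqfac_q_mul (n : ℕ) : bqfac q (q * n) = q ^ n * bqfac q n := by
  induction n with
  | zero => simp [bqfac]
  | succ k ih =>
    have key : ∀ i ≤ q - 1, bqfac q (q * k + i) = bqfac q (q * k) := by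
      intro i hi
      induction i with
      | zero => rfl
      | succ j ihj =>
        rw [show q * k + (j + 1) = (q * k + j) + 1 by ring, bqfac_succ hq,
          show q * k + j + 1 = q * k + (j + 1) by ring,
          bq_not_dvd hq (not_dvd_aux hq (by omega) (by omega)), mul_one, ihj (by omega)]
    have h1 : q * (k+1) = (q * k + (q-1)) + 1 := by
      have : q * (k+1) = q * k + q := by ring
      omega
    have : bqfac q (q * (k+1)) = bqfac q (q * k + (q-1)) * bq q (q * (k+1)) := by
      rw [h1, bqfac_succ hq, ← h1]
    rw [this, key (q-1) le_rfl, ih, bq_mul hq (Nat.succ_ne_zero k), bqfac_succ hq]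
    ring

lemma bqfac_q_mul_add (n : ℕ) {m : ℕ} (hm : m < q) :
    bqfac q (q * n + m) = q ^ n * bqfac q n := by
  induction m with
  | zero => simpa using bqfac_q_mul hq n
  | succ j ihj =>
    rw [show q * n + (j+1) = (q * n + j) + 1 by ring, bqfac_succ hq,
      ihj (by omega),
      show q * n + j + 1 = q * n + (j + 1) by ring,
      bq_not_dvd hq (not_dvd_aux hq (by omega) (by omega)), mul_one]

lemma bq_ne_zero {k : ℕ} (hk : k ≠ 0) : bq q k ≠ 0 := by
  simp only [bq, hk, if_false]
  positivity

lemma bqfac_ne_zero (n : ℕ) : bqfac q n ≠ 0 := by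
  rw [bqfac]
  exact Finset.prod_ne_zero_iff.mpr fun i hi => bq_ne_zero hq (by simp at hi; omega)

end aux

section key
variable {q : ℕ} (hq : 2 ≤ q)
include hq

lemma Cq_case1 {n a m b : ℕ} (hm : m < q) (ha : a ≤ n) (hb : b ≤ m) :
    Cq q (q * n + m) (q * a + b) = Cq q n a := by
  have hle : q * a + b ≤ q * n + m :=
    Nat.add_le_add (Nat.mul_le_mul_left q ha) hb
  have hsub : q * n + m - (q * a + b) = q * (n - a) + (m - b) := by
    have h1 : q * (n - a) + (m - b) + (q * a + b) = q * n + m := by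
      have h2 : q * (n - a) + q * a = q * n := by
        rw [← Nat.mul_add]
        congr 1
        omega
      omega
    omega
  rw [Cq, Cq, if_pos hle, if_pos ha, hsub,
    bqfac_q_mul_add hq n hm, bqfac_q_mul_add hq a (by omega),
    bqfac_q_mul_add hq (n - a) (by omega)]
  have hpow : (q : ℚ) ^ a * (q : ℚ) ^ (n - a) = (q : ℚ) ^ n := by
    rw [← pow_add]
    congr 1
    omega
  rw [show (q:ℚ) ^ a * bqfac q a * ((q:ℚ) ^ (n-a) * bqfac q (n-a))
      = (q:ℚ) ^ n * (bqfac q a * bqfac q (n-a)) by rw [← hpow]; ring,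
    mul_div_mul_left _ _ (pow_ne_zero n (hq0 hq))]

lemma Cq_case2 {n a m b : ℕ} (hm : m < b) (hb : b < q) (ha : a < n) :
    Cq q (q * n + m) (q * a + b) = q * bq q n * Cq q (n - 1) a := by
  obtain ⟨k, rfl⟩ : ∃ k, n = k + 1 := ⟨n - 1, by omega⟩
  have ha' : a ≤ k := by omega
  have hle : q * a + b ≤ q * (k + 1) + m := by
    have := Nat.mul_le_mul_left q (show a + 1 ≤ k + 1 by omega)
    have h2 : q * (a + 1) = q * a + q := by ring
    omega
  have hsub : q * (k + 1) + m - (q * a + b) = q * (k - a) + (q + m - b) := by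
    have h1 : q * (k - a) + (q + m - b) + (q * a + b) = q * (k + 1) + m := by
      have h2 : q * (k - a) + q * a + q = q * (k + 1) := by
        rw [← Nat.mul_add]
        have : k - a + a = k := by omega
        rw [this]
        ring
      omega
    omega
  rw [Cq, Cq, if_pos hle, if_pos (show a ≤ k + 1 - 1 by omega), hsub,
    bqfac_q_mul_add hq (k+1) (by omega), bqfac_q_mul_add hq a (by omega),
    bqfac_q_mul_add hq (k - a) (by omega), show k + 1 - 1 = k from rfl,
    bqfac_succ hq k]
  have hpow : (q : ℚ) ^ (k+1) = (q:ℚ) * ((q : ℚ) ^ a * (q : ℚ) ^ (k - a)) := by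
    rw [← pow_add, ← pow_succ']
    congr 1
    omega
  have h1 := bqfac_ne_zero hq a
  have h2 := bqfac_ne_zero hq (k - a)
  have h3 := hq0 hq
  field_simp
  rw [hpow]
  ring

end key

lemma u_comp (q n : ℕ) :
    (u q n).comp (X ^ q) = ∑ a ∈ range (n + 1), C (Cq q n a) * X ^ (q * a) := by
  rw [u, Polynomial.sum_comp]
  refine Finset.sum_congr rfl fun a _ => ?_
  rw [Polynomial.mul_comp, Polynomial.C_comp, Polynomial.pow_comp, Polynomial.X_comp,
    ← pow_mul]

lemma w_natCast (m : ℕ) : w (m : ℤ) = ∑ s ∈ range (m + 1), (X : Polynomial ℚ) ^ s := by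
  rw [w, if_neg (by omega)]
  norm_num

lemma w_q_sub {q m : ℕ} (hq : 2 ≤ q) (hm : m < q) :
    w ((q : ℤ) - 2 - (m : ℤ)) = ∑ s ∈ range (q - 1 - m), (X : Polynomial ℚ) ^ s := by
  rw [w]
  by_cases h : (q : ℤ) - 2 - (m : ℤ) < 0
  · rw [if_pos h, show q - 1 - m = 0 by omega]
    simp
  · rw [if_neg h, show ((q : ℤ) - 2 - (m : ℤ)).toNat + 1 = q - 1 - m by omega]

theorem stmt19 (q : ℕ) (hq : 2 ≤ q) (n m : ℕ) (hm : m < q) :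
    u q (q * n + m) =
      w (m : ℤ) * (u q n).comp (Polynomial.X ^ q)
        + Polynomial.C ((q : ℚ) * bq q n) * Polynomial.X ^ (m + 1) *
            w ((q : ℤ) - 2 - (m : ℤ)) * (u q (n - 1)).comp (Polynomial.X ^ q) := by
  have hqpos : 0 < q := by omega
  rcases n with _ | N
  · -- n = 0
    have hbq0 : bq q 0 = 0 := by simp [bq]
    have hu0 : u q 0 = 1 := by
      simp [u, Cq, bqfac]
    rw [hbq0]
    simp only [mul_zero, Polynomial.C_0, zero_mul, add_zero, zero_add]
    rw [hu0, Polynomial.one_comp, mul_one, w_natCast]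
    simp only [u]
    refine Finset.sum_congr rfl fun j hj => ?_
    simp only [mem_range] at hj
    have h1 : Cq q m j = 1 := by
      have hb : ∀ r < q, bqfac q r = 1 := by
        intro r hr
        have := bqfac_q_mul_add hq 0 hr
        simpa [bqfac] using this
      rw [Cq, if_pos (by omega), hb m hm, hb j (by omega), hb (m - j) (by omega)]
      norm_num
    rw [h1, map_one, one_mul]
  · -- n = N + 1
    simp only [Nat.add_sub_cancel]
    set n := N + 1 with hn
    rw [u_comp, u_comp, w_natCast, w_q_sub hq hm]
    have h1 : (∑ b ∈ range (m+1), (X:Polynomial ℚ)^b) *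
        (∑ a ∈ range (n+1), C (Cq q n a) * X^(q*a))
        = ∑ p ∈ range (m+1) ×ˢ range (n+1),
            C (Cq q (q*n+m) (q*p.2+p.1)) * X^(q*p.2+p.1) := by
      rw [Finset.sum_mul_sum, Finset.sum_product]
      refine Finset.sum_congr rfl fun b hb => Finset.sum_congr rfl fun a ha => ?_
      simp only [mem_range] at hb ha
      dsimp only
      rw [Cq_case1 hq hm (by omega) (by omega), pow_add]
      ring
    have h2 : C ((q:ℚ) * bq q n) * X^(m+1) * (∑ s ∈ range (q-1-m), (X:Polynomial ℚ)^s) *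
        (∑ a ∈ range (N+1), C (Cq q N a) * X^(q*a))
        = ∑ p ∈ range (q-1-m) ×ˢ range (N+1),
            C (Cq q (q*n+m) (q*p.2+(m+1+p.1))) * X^(q*p.2+(m+1+p.1)) := by
      rw [mul_assoc, Finset.sum_mul_sum, Finset.sum_product]
      simp only [Finset.mul_sum]
      refine Finset.sum_congr rfl fun b hb => Finset.sum_congr rfl fun a ha => ?_
      simp only [mem_range] at hb ha
      rw [show q*a+(m+1+b) = q*a+(m+1+b) from rfl,
        Cq_case2 hq (show m < m+1+b by omega) (by omega) (show a < n by omega),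
        show n - 1 = N from rfl]
      simp only [map_mul, pow_add]
      ring
    rw [h1, h2]
    have h3 : ∑ p ∈ range (m+1) ×ˢ range (n+1),
        C (Cq q (q*n+m) (q*p.2+p.1)) * X^(q*p.2+p.1)
        = ∑ j ∈ (range (q*n+m+1)).filter (fun j => j % q ≤ m),
            C (Cq q (q*n+m) j) * X^j := by
      refine Finset.sum_nbij' (fun p => q*p.2+p.1) (fun j => (j % q, j / q)) ?_ ?_ ?_ ?_ ?_
      · rintro ⟨b, a⟩ hp
        simp only [mem_product, mem_range] at hp
        simp only [mem_filter, mem_range]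
        have hmul := Nat.mul_le_mul_left q (show a ≤ n by omega)
        refine ⟨by omega, ?_⟩
        rw [Nat.mul_add_mod]
        rw [Nat.mod_eq_of_lt (by omega)]
        omega
      · intro j hj
        simp only [mem_filter, mem_range] at hj
        simp only [mem_product, mem_range]
        have hmod := Nat.mod_lt j hqpos
        have hdm := Nat.div_add_mod j q
        constructor
        · omega
        · have : j / q < n + 1 := by
            rw [Nat.div_lt_iff_lt_mul hqpos]
            have : (n+1) * q = q * n + q := by ring
            omega
          exact this
      · rintro ⟨b, a⟩ hp
        simp only [mem_product, mem_range] at hp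
        have hmodd : (q*a+b) % q = b := by
          rw [Nat.mul_add_mod, Nat.mod_eq_of_lt (by omega)]
        have hdivv : (q*a+b) / q = a := by
          rw [Nat.mul_add_div hqpos, Nat.div_eq_of_lt (by omega), add_zero]
        simp [hmodd, hdivv]
      · intro j hj
        have hdm := Nat.div_add_mod j q
        simp only []
        omega
      · rintro ⟨b, a⟩ hp
        rfl
    have h4 : ∑ p ∈ range (q-1-m) ×ˢ range (N+1),
        C (Cq q (q*n+m) (q*p.2+(m+1+p.1))) * X^(q*p.2+(m+1+p.1))
        = ∑ j ∈ (range (q*n+m+1)).filter (fun j => ¬ j % q ≤ m),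
            C (Cq q (q*n+m) j) * X^j := by
      refine Finset.sum_nbij' (fun p => q*p.2+(m+1+p.1)) (fun j => (j % q - (m+1), j / q))
        ?_ ?_ ?_ ?_ ?_
      · rintro ⟨b, a⟩ hp
        simp only [mem_product, mem_range] at hp
        simp only [mem_filter, mem_range, not_le]
        have hmul := Nat.mul_le_mul_left q (show a + 1 ≤ n by omega)
        have hq1 : q * (a + 1) = q * a + q := by ring
        refine ⟨by omega, ?_⟩
        rw [Nat.mul_add_mod, Nat.mod_eq_of_lt (by omega)]
        omega
      · intro j hj
        simp only [mem_filter, mem_range, not_le] at hj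
        simp only [mem_product, mem_range]
        have hmod := Nat.mod_lt j hqpos
        have hdm := Nat.div_add_mod j q
        constructor
        · omega
        · have hlt : j / q < n := by
            by_contra hc
            push_neg at hc
            have := Nat.mul_le_mul_left q hc
            omega
          omega
      · rintro ⟨b, a⟩ hp
        simp only [mem_product, mem_range] at hp
        have hmodd : (q*a+(m+1+b)) % q = m+1+b := by
          rw [Nat.mul_add_mod, Nat.mod_eq_of_lt (by omega)]
        have hdivv : (q*a+(m+1+b)) / q = a := by
          rw [Nat.mul_add_div hqpos, Nat.div_eq_of_lt (by omega), add_zero]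
        simp [hmodd, hdivv]
      · intro j hj
        simp only [mem_filter, mem_range, not_le] at hj
        have hdm := Nat.div_add_mod j q
        simp only []
        omega
      · rintro ⟨b, a⟩ hp
        rfl
    rw [h3, h4, Finset.sum_filter_add_sum_filter_not]
    rfl
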